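/- arXiv:2101.00735 — 3 statements merged into one kernel-verified Lean document; each statement's English description precedes it below -/
import Mathlib

section
/- For every even integer d ≥ 4, the set U_d^even = (⋃_{k=0}^{(d−4)/2} C^{(d,d−2k)}) ∪ A^{(d,0)} ∪ {S_d} is an unextendible product basis in ℂ^(Fin d × Fin d × Fin d): if u, v, w ∈ ℂ^d are such that the product vector u ⊗ v ⊗ w is orthogonal to every member of U_d^even, then u ⊗ v ⊗ w = 0 (equivalently, u = 0 or v = 0 or w = 0). -/
open scoped ComplexOrder

noncomputable section

/-- the standard basis vector e_a of ℂ^d (indexed by a natural number `a`;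
it is the zero vector when `a ≥ d`). -/
def eV (d : ℕ) (a : ℕ) : Fin d → ℂ := fun k => if (k : ℕ) = a then 1 else 0

/-- ω_m = exp(2πi/m) -/
def wN (m : ℕ) : ℂ := Complex.exp (2 * Real.pi * Complex.I / m)

/-- η_i^{(d−2k)} = Σ_{t=k}^{d−2−k} ω_{d−1−2k}^{i(t−k)} e_t -/
def etaG (d k i : ℕ) : Fin d → ℂ :=
  fun a => ∑ t ∈ Finset.Icc k (d - 2 - k), wN (d - 1 - 2 * k) ^ (i * (t - k)) * eV d t a

/-- ξ_j^{(d−2k)} = Σ_{t=k}^{d−2−k} ω_{d−1−2k}^{j(t−k)} e_{t+1} -/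
def xiG (d k j : ℕ) : Fin d → ℂ :=
  fun a => ∑ t ∈ Finset.Icc k (d - 2 - k), wN (d - 1 - 2 * k) ^ (j * (t - k)) * eV d (t + 1) a

/-- the product vector u ⊗ v ⊗ w -/
def tpv (d : ℕ) (u v w : Fin d → ℂ) : Fin d × Fin d × Fin d → ℂ :=
  fun p => u p.1 * v p.2.1 * w p.2.2

/-- the stopper state S_d = (Σ e_i) ⊗ (Σ e_j) ⊗ (Σ e_k) -/
def stopD (d : ℕ) : Fin d × Fin d × Fin d → ℂ :=
  tpv d (fun a => ∑ i ∈ Finset.range d, eV d i a)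
    (fun a => ∑ i ∈ Finset.range d, eV d i a)
    (fun a => ∑ i ∈ Finset.range d, eV d i a)

/-- the set C^{(d,d−2k)}, the union of the six families A₁, A₂, A₃, B₁, B₂, B₃
indexed by (i,j) ∈ ℤ_{d−1−2k} × ℤ_{d−1−2k} \ {(0,0)} -/
def Cset (d k : ℕ) : Set (Fin d × Fin d × Fin d → ℂ) :=
  {x | ∃ i j : ℕ, i < d - 1 - 2 * k ∧ j < d - 1 - 2 * k ∧ ¬(i = 0 ∧ j = 0) ∧
      (x = tpv d (xiG d k j) (eV d k) (etaG d k i) ∨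
       x = tpv d (xiG d k j) (etaG d k i) (eV d (d - 1 - k)) ∨
       x = tpv d (eV d (d - 1 - k)) (xiG d k j) (etaG d k i) ∨
       x = tpv d (etaG d k i) (eV d (d - 1 - k)) (xiG d k j) ∨
       x = tpv d (etaG d k i) (xiG d k j) (eV d k) ∨
       x = tpv d (eV d k) (etaG d k i) (xiG d k j))}

/-- with φ_i = e_{(d−2)/2} + (−1)^i e_{d/2}, the set
A^{(d,0)} = { φ_r ⊗ φ_s ⊗ φ_t : (r,s,t) ≠ (0,0,0) } (for even d) -/
def phiE (d i : ℕ) : Fin d → ℂ :=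
  fun a => eV d ((d - 2) / 2) a + (-1 : ℂ) ^ i * eV d (d / 2) a

def A0set (d : ℕ) : Set (Fin d × Fin d × Fin d → ℂ) :=
  {x | ∃ r s t : ℕ, r < 2 ∧ s < 2 ∧ t < 2 ∧ ¬(r = 0 ∧ s = 0 ∧ t = 0) ∧
      x = tpv d (phiE d r) (phiE d s) (phiE d t)}

/-- U_d^odd = (⋃_{k=0}^{(d−3)/2} C^{(d,d−2k)}) ∪ {S_d} -/
def Uodd (d : ℕ) : Set (Fin d × Fin d × Fin d → ℂ) :=
  {x | ∃ k ≤ (d - 3) / 2, x ∈ Cset d k} ∪ {stopD d}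

/-- U_d^even = (⋃_{k=0}^{(d−4)/2} C^{(d,d−2k)}) ∪ A^{(d,0)} ∪ {S_d} -/
def Ueven (d : ℕ) : Set (Fin d × Fin d × Fin d → ℂ) :=
  {x | ∃ k ≤ (d - 4) / 2, x ∈ Cset d k} ∪ A0set d ∪ {stopD d}

/-- the standard Hermitian inner product on ℂ^(Fin d × Fin d × Fin d) -/
def inpD (d : ℕ) (x y : Fin d × Fin d × Fin d → ℂ) : ℂ :=
  ∑ p, (starRingEnd ℂ) (x p) * y p

/-- Ẽ = I_d ⊗ E acting on ℂ^(Fin d × Fin d × Fin d) -/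
def ampBCD (d : ℕ) (E : Matrix (Fin d × Fin d) (Fin d × Fin d) ℂ) :
    Matrix (Fin d × Fin d × Fin d) (Fin d × Fin d × Fin d) ℂ :=
  fun p q => (if p.1 = q.1 then (1 : ℂ) else 0) * E p.2 q.2


/-!
Orthogonality of `u ⊗ v ⊗ w` to a family `ξ_j ⊗ e ⊗ η_i`, `(i, j) ≠ (0, 0)`, says that the
`e`-coefficient of its factor vanishes, or else (by Fourier inversion over the `m`-th roots of
unity) that the factors paired with `ξ` and `η` are zero or constant on the last, resp. first,
`m` coordinates of the window `[k, d - 1 - k]`. The stopper contributes the product of the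
three coordinate sums. A finite case analysis on these alternatives shows that the window
endpoints `k` and `d - 1 - k` of all three vectors vanish; the six families of `C^{(d,d−2k)}` are
permuted by cycling the factors and by reflecting the window, so one endpoint of one vector
suffices. Peeling `k = 0, …, (d - 4)/2` leaves `u, v, w` supported on the two middle coordinates,
where the stopper restricts to `φ₀ ⊗ φ₀ ⊗ φ₀`; so all eight products `⟨φ_r, u⟩⟨φ_s, v⟩⟨φ_t, w⟩`
vanish, and since `φ₀, φ₁` span the middle coordinates one of the vectors is zero.
-/

open Finset

section Window

variable {K : Type*} {m : ℕ} {y : ℕ → K}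

def HeadConst (m : ℕ) (y : ℕ → K) : Prop := ∀ s < m, y s = y 0

def TailConst (m : ℕ) (y : ℕ → K) : Prop := HeadConst m fun s => y (s + 1)

def mirror (m : ℕ) (y : ℕ → K) : ℕ → K := fun s => y (m - s)

@[simp]
theorem mirror_zero : mirror m y 0 = y m := rfl

@[simp]
theorem mirror_self : mirror m y m = y 0 := by simp [mirror]

theorem headConst_mirror_iff : HeadConst m (mirror m y) ↔ TailConst m y := by
  simp only [HeadConst, TailConst, mirror, Nat.sub_zero, zero_add]
  constructor <;> intro h s hs
  · have hs' := h (m - (s + 1)) (by omega)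
    have h₁ := h (m - 1) (by omega)
    rw [show m - (m - (s + 1)) = s + 1 by omega] at hs'
    rw [show m - (m - 1) = 1 by omega] at h₁
    rw [hs', h₁]
  · have hs' := h (m - s - 1) (by omega)
    have hm := h (m - 1) (by omega)
    rw [show m - s - 1 + 1 = m - s by omega] at hs'
    rw [show m - 1 + 1 = m by omega] at hm
    rw [hs', hm]

theorem tailConst_mirror_iff : TailConst m (mirror m y) ↔ HeadConst m y := by
  simp only [HeadConst, TailConst, mirror, zero_add]
  constructor <;> intro h s hs
  · have hs' := h (m - s - 1) (by omega)
    have h₀ := h (m - 1) (by omega)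
    rw [show m - (m - s - 1 + 1) = s by omega] at hs'
    rw [show m - (m - 1 + 1) = 0 by omega] at h₀
    rw [hs', h₀]
  · rw [h (m - (s + 1)) (by omega), h (m - 1) (by omega)]

theorem sum_mirror [AddCommMonoid K] :
    ∑ s ∈ range (m + 1), mirror m y s = ∑ s ∈ range (m + 1), y s := by
  simpa [mirror] using sum_range_reflect y (m + 1)

theorem exists_mirror_ne_zero [Zero K] (hy : ∃ s ≤ m, y s ≠ 0) : ∃ s ≤ m, mirror m y s ≠ 0 := by
  obtain ⟨s, hs, hys⟩ := hy
  exact ⟨m - s, by omega, by simpa [mirror, Nat.sub_sub_self hs]⟩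

theorem HeadConst.sum_range [NonAssocSemiring K] (h : HeadConst m y) :
    ∑ s ∈ range m, y s = m * y 0 := by
  rw [sum_congr rfl fun s hs => h s (mem_range.1 hs), sum_const, card_range, nsmul_eq_mul]

theorem HeadConst.sum_eq [NonAssocSemiring K] (h : HeadConst m y) :
    ∑ s ∈ range (m + 1), y s = m * y 0 + y m := by
  rw [sum_range_succ, h.sum_range]

theorem TailConst.last_eq (hm : 1 ≤ m) (h : TailConst m y) : y m = y 1 := by
  simpa [Nat.sub_add_cancel hm] using h (m - 1) (by omega)

theorem TailConst.sum_range [NonAssocSemiring K] (hm : 1 ≤ m) (h : TailConst m y) :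
    ∑ s ∈ range m, y (s + 1) = m * y m := by
  rw [HeadConst.sum_range h, h.last_eq hm]

theorem HeadConst.eq_of_tailConst (hm : 2 ≤ m) (h : HeadConst m y) (h' : TailConst m y) :
    y 0 = y m := by
  rw [h'.last_eq (by omega), h 1 (by omega)]

theorem HeadConst.ends_ne_zero [Zero K] (hy : ∃ s ≤ m, y s ≠ 0) (h : HeadConst m y) :
    y 0 ≠ 0 ∨ y m ≠ 0 := by
  by_contra! h₀
  obtain ⟨s, hs, hys⟩ := hy
  rcases hs.lt_or_eq with hs | rfl
  · exact hys ((h s hs).trans h₀.1)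
  · exact hys h₀.2

theorem TailConst.ends_ne_zero [Zero K] (hy : ∃ s ≤ m, y s ≠ 0) (h : TailConst m y) :
    y 0 ≠ 0 ∨ y m ≠ 0 := by
  simpa [or_comm] using (headConst_mirror_iff.2 h).ends_ne_zero (exists_mirror_ne_zero hy)

theorem HeadConst.sum_ne_zero [Field K] [CharZero K] (hm : 1 ≤ m) (hy : ∃ s ≤ m, y s ≠ 0)
    (h : HeadConst m y) (hend : y 0 = 0 ∨ y m = 0) : ∑ s ∈ range (m + 1), y s ≠ 0 := by
  rw [h.sum_eq]
  rcases hend with h₀ | h₀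
  · simpa [h₀] using h.ends_ne_zero hy
  · have : y 0 ≠ 0 := by simpa [h₀] using h.ends_ne_zero hy
    rw [h₀, add_zero]
    exact mul_ne_zero (Nat.cast_ne_zero.2 (by omega)) this

theorem TailConst.sum_ne_zero [Field K] [CharZero K] (hm : 1 ≤ m) (hy : ∃ s ≤ m, y s ≠ 0)
    (h : TailConst m y) (hend : y 0 = 0 ∨ y m = 0) : ∑ s ∈ range (m + 1), y s ≠ 0 := by
  rw [← sum_mirror]
  exact (headConst_mirror_iff.2 h).sum_ne_zero hm (exists_mirror_ne_zero hy)
    (by simpa [or_comm] using hend)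

theorem HeadConst.sum_ne_zero_of_tailConst [Field K] [CharZero K] (hm : 2 ≤ m)
    (hy : ∃ s ≤ m, y s ≠ 0) (h : HeadConst m y) (h' : TailConst m y) :
    ∑ s ∈ range (m + 1), y s ≠ 0 := by
  have hend := h.eq_of_tailConst hm h'
  have h₀ : y 0 ≠ 0 := by simpa [← hend] using h.ends_ne_zero hy
  rw [h.sum_eq, ← hend, ← add_one_mul]
  exact mul_ne_zero (by exact_mod_cast m.succ_ne_zero) h₀

end Window

section DFT

variable {K : Type*} [Field K] {ζ : K} {m : ℕ}

theorem IsPrimitiveRoot.geom_sum_inv_pow_mul_pow (hζ : IsPrimitiveRoot ζ m) {s t : ℕ}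
    (hs : s < m) (ht : t < m) :
    ∑ i ∈ range m, (ζ⁻¹ ^ s * ζ ^ t) ^ i = if t = s then (m : K) else 0 := by
  have hζ₀ : ζ ≠ 0 := hζ.ne_zero (by omega)
  split_ifs with hts
  · simp [hts, hζ₀]
  · have hne : ζ⁻¹ ^ s * ζ ^ t ≠ 1 := by
      rw [inv_pow, Ne, inv_mul_eq_one₀ (pow_ne_zero _ hζ₀)]
      exact fun h => hts (hζ.pow_inj ht hs h.symm)
    have hpow : (ζ⁻¹ ^ s * ζ ^ t) ^ m = 1 := by
      rw [mul_pow, ← pow_mul, ← pow_mul, mul_comm s, mul_comm t, pow_mul, pow_mul,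
        hζ.inv.pow_eq_one, hζ.pow_eq_one, one_pow, one_pow, one_mul]
    rw [geom_sum_eq hne, hpow, sub_self, zero_div]

theorem IsPrimitiveRoot.dft_inversion (hζ : IsPrimitiveRoot ζ m) (y : ℕ → K) {s : ℕ}
    (hs : s < m) :
    ∑ i ∈ range m, ζ⁻¹ ^ (i * s) * ∑ t ∈ range m, ζ ^ (i * t) * y t = m * y s := by
  calc _ = ∑ t ∈ range m, (∑ i ∈ range m, (ζ⁻¹ ^ s * ζ ^ t) ^ i) * y t := by
        simp_rw [mul_sum, sum_mul]
        rw [sum_comm]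
        refine sum_congr rfl fun t _ => sum_congr rfl fun i _ => ?_
        rw [mul_pow, ← pow_mul, ← pow_mul, mul_comm s, mul_comm t, mul_assoc]
    _ = ∑ t ∈ range m, if t = s then m * y t else 0 := by
        refine sum_congr rfl fun t ht => ?_
        rw [hζ.geom_sum_inv_pow_mul_pow hs (mem_range.1 ht), ite_mul, zero_mul]
    _ = m * y s := by rw [sum_ite_eq' _ _ (fun t => (m : K) * y t), if_pos (mem_range.2 hs)]

theorem IsPrimitiveRoot.headConst_of_dft (hζ : IsPrimitiveRoot ζ m) {y : ℕ → K}
    (h : ∀ i < m, i ≠ 0 → ∑ t ∈ range m, ζ ^ (i * t) * y t = 0) : HeadConst m y := by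
  have key : ∀ s < m, (m : K) * y s = ∑ t ∈ range m, y t := by
    intro s hs
    rw [← hζ.dft_inversion y hs, sum_eq_single 0 (fun i hi hi₀ => by
      rw [h i (mem_range.1 hi) hi₀, mul_zero]) (fun h₀ => by simp at h₀; omega)]
    simp
  intro s hs
  have : NeZero m := ⟨by omega⟩
  exact mul_left_cancel₀ hζ.neZero'.out ((key s hs).trans (key 0 (by omega)).symm)

end DFT

section Conditions

variable {K : Type*} [Field K] {m : ℕ} {u v w y z : ℕ → K} {c ζ : K}

/-- Orthogonality to `ξ_j ⊗ e ⊗ η_i` for all `(i, j) ≠ (0, 0)`, where `c` is the coefficient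
at `e` and `y`, `z` are the windows paired with the `ξ_j`, resp. the `η_i`
(see `orthFamily_of_dft`). -/
def OrthFamily (m : ℕ) (c : K) (y z : ℕ → K) : Prop :=
  c = 0 ∨ (TailConst m y ∧ y m = 0) ∨ (HeadConst m z ∧ z 0 = 0) ∨ (TailConst m y ∧ HeadConst m z)

theorem orthFamily_of_dft (hζ : IsPrimitiveRoot ζ m)
    (h : ∀ i < m, ∀ j < m, ¬(i = 0 ∧ j = 0) →
      c * (∑ t ∈ range m, ζ ^ (j * t) * y (t + 1)) * (∑ t ∈ range m, ζ ^ (i * t) * z t) = 0) :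
    OrthFamily m c y z := by
  rcases eq_or_ne c 0 with hc | hc
  · exact Or.inl hc
  have h' : ∀ i < m, ∀ j < m, ¬(i = 0 ∧ j = 0) →
      (∑ t ∈ range m, ζ ^ (j * t) * y (t + 1)) * (∑ t ∈ range m, ζ ^ (i * t) * z t) = 0 :=
    fun i hi j hj hij => by simpa [hc, mul_assoc] using h i hi j hj hij
  by_cases hy : ∀ j < m, j ≠ 0 → ∑ t ∈ range m, ζ ^ (j * t) * y (t + 1) = 0
  · have ht : TailConst m y := hζ.headConst_of_dft hy
    by_cases hz : ∀ i < m, i ≠ 0 → ∑ t ∈ range m, ζ ^ (i * t) * z t = 0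
    · exact Or.inr (Or.inr (Or.inr ⟨ht, hζ.headConst_of_dft hz⟩))
    push Not at hz
    obtain ⟨i, hi, hi₀, hzi⟩ := hz
    have : NeZero m := ⟨by omega⟩
    have hy₀ := (mul_eq_zero.1 (h' i hi 0 (by omega) (by simp [hi₀]))).resolve_right hzi
    simp only [zero_mul, pow_zero, one_mul, ht.sum_range (by omega)] at hy₀
    exact Or.inr (Or.inl ⟨ht, (mul_eq_zero.1 hy₀).resolve_left hζ.neZero'.out⟩)
  · push Not at hy
    obtain ⟨j, hj, hj₀, hyj⟩ := hy
    have hz : ∀ i < m, ∑ t ∈ range m, ζ ^ (i * t) * z t = 0 :=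
      fun i hi => (mul_eq_zero.1 (h' i hi j hj (by simp [hj₀]))).resolve_left hyj
    have hh : HeadConst m z := hζ.headConst_of_dft fun i hi _ => hz i hi
    have : NeZero m := ⟨by omega⟩
    have hz₀ := hz 0 (by omega)
    simp only [zero_mul, pow_zero, one_mul, hh.sum_range] at hz₀
    exact Or.inr (Or.inr (Or.inl ⟨hh, (mul_eq_zero.1 hz₀).resolve_left hζ.neZero'.out⟩))

theorem OrthFamily.mirror (h : OrthFamily m c y z) : OrthFamily m c (mirror m z) (mirror m y) := by
  simp only [OrthFamily, headConst_mirror_iff, tailConst_mirror_iff, mirror_zero, mirror_self]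
    at h ⊢
  tauto

/-- The conditions that `C^{(d,d−2k)}` and the stopper impose on the windows `u, v, w`
(`s ↦ x_{k+s}`, `s ≤ m = d − 1 − 2k`): `first_u` comes from `e_k ⊗ η_i ⊗ ξ_j`, and the other
families from it by cycling the factors and by reflecting the window. -/
structure WindowConditions (m : ℕ) (u v w : ℕ → K) : Prop where
  first_u : OrthFamily m (u 0) w v
  first_v : OrthFamily m (v 0) u w
  first_w : OrthFamily m (w 0) v u
  last_u : OrthFamily m (u m) v w
  last_v : OrthFamily m (v m) w u
  last_w : OrthFamily m (w m) u v
  stopper :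
    (∑ s ∈ range (m + 1), u s) * (∑ s ∈ range (m + 1), v s) * (∑ s ∈ range (m + 1), w s) = 0

theorem WindowConditions.rotate (h : WindowConditions m u v w) : WindowConditions m v w u where
  first_u := h.first_v
  first_v := h.first_w
  first_w := h.first_u
  last_u := h.last_v
  last_v := h.last_w
  last_w := h.last_u
  stopper := by linear_combination h.stopper

theorem WindowConditions.mirror (h : WindowConditions m u v w) :
    WindowConditions m (mirror m u) (mirror m v) (mirror m w) where
  first_u := by simpa using h.last_u.mirror
  first_v := by simpa using h.last_v.mirror
  first_w := by simpa using h.last_w.mirror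
  last_u := by simpa using h.first_u.mirror
  last_v := by simpa using h.first_v.mirror
  last_w := by simpa using h.first_w.mirror
  stopper := by simpa only [sum_mirror] using h.stopper

theorem WindowConditions.first_eq_zero [CharZero K] (hm : 2 ≤ m) (hu : ∃ s ≤ m, u s ≠ 0)
    (hv : ∃ s ≤ m, v s ≠ 0) (hw : ∃ s ≤ m, w s ≠ 0) (h : WindowConditions m u v w) :
    u 0 = 0 := by
  obtain ⟨h₁, h₂, h₃, h₄, h₅, h₆, hstop⟩ := h
  simp only [OrthFamily] at h₁ h₂ h₃ h₄ h₅ h₆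
  -- The rest is a propositional case analysis, which needs no more about a single window.
  have facts : ∀ y : ℕ → K, (∃ s ≤ m, y s ≠ 0) →
      (HeadConst m y → (y 0 ≠ 0 ∨ y m ≠ 0) ∧
        (y 0 = 0 ∨ y m = 0 → ∑ s ∈ range (m + 1), y s ≠ 0)) ∧
      (TailConst m y → (y 0 ≠ 0 ∨ y m ≠ 0) ∧
        (y 0 = 0 ∨ y m = 0 → ∑ s ∈ range (m + 1), y s ≠ 0)) ∧
      (HeadConst m y → TailConst m y → y 0 = y m ∧ ∑ s ∈ range (m + 1), y s ≠ 0) :=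
    fun y hy => ⟨fun hh => ⟨hh.ends_ne_zero hy, hh.sum_ne_zero (by omega) hy⟩,
      fun ht => ⟨ht.ends_ne_zero hy, ht.sum_ne_zero (by omega) hy⟩,
      fun hh ht => ⟨hh.eq_of_tailConst hm ht, hh.sum_ne_zero_of_tailConst hm hy ht⟩⟩
  have := facts u hu
  have := facts v hv
  have := facts w hw
  grind

theorem WindowConditions.ends_eq_zero [CharZero K] (hm : 2 ≤ m) (hu : ∃ s ≤ m, u s ≠ 0)
    (hv : ∃ s ≤ m, v s ≠ 0) (hw : ∃ s ≤ m, w s ≠ 0) (h : WindowConditions m u v w) :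
    (u 0 = 0 ∧ u m = 0) ∧ (v 0 = 0 ∧ v m = 0) ∧ (w 0 = 0 ∧ w m = 0) := by
  have hu' := exists_mirror_ne_zero hu
  have hv' := exists_mirror_ne_zero hv
  have hw' := exists_mirror_ne_zero hw
  exact ⟨⟨h.first_eq_zero hm hu hv hw, h.mirror.first_eq_zero hm hu' hv' hw'⟩,
    ⟨h.rotate.first_eq_zero hm hv hw hu, h.mirror.rotate.first_eq_zero hm hv' hw' hu'⟩,
    ⟨h.rotate.rotate.first_eq_zero hm hw hu hv,
      h.mirror.rotate.rotate.first_eq_zero hm hw' hu' hv'⟩⟩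

end Conditions

section Coordinates

variable {d : ℕ}

def coord (x : Fin d → ℂ) (t : ℕ) : ℂ := if h : t < d then x ⟨t, h⟩ else 0

theorem star_eV_dotProduct (t : ℕ) (x : Fin d → ℂ) : star (eV d t) ⬝ᵥ x = coord x t := by
  unfold coord
  split_ifs with ht
  · rw [dotProduct, sum_eq_single ⟨t, ht⟩ (fun i _ hi => by simp [eV, Fin.ext_iff.not.1 hi])
      (by simp)]
    simp [eV]
  · simp [dotProduct, eV, show ∀ i : Fin d, (i : ℕ) ≠ t from fun i => by omega]

theorem star_sum_mul_dotProduct {ι : Type*} (s : Finset ι) (c : ι → ℂ) (g : ι → Fin d → ℂ)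
    (x : Fin d → ℂ) :
    star (fun a => ∑ t ∈ s, c t * g t a) ⬝ᵥ x = ∑ t ∈ s, star (c t) * (star (g t) ⬝ᵥ x) := by
  have : (fun a => ∑ t ∈ s, c t * g t a) = ∑ t ∈ s, c t • g t := by
    ext a
    simp [Finset.sum_apply]
  simp [this, star_sum, sum_dotProduct, star_smul, smul_dotProduct]

theorem star_sum_eV_dotProduct (x : Fin d → ℂ) :
    star (fun a => ∑ i ∈ range d, eV d i a) ⬝ᵥ x = ∑ t ∈ range d, coord x t := by
  simpa [star_eV_dotProduct] using star_sum_mul_dotProduct (range d) 1 (eV d) x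

theorem star_phiE_dotProduct (r : ℕ) (x : Fin d → ℂ) :
    star (phiE d r) ⬝ᵥ x = coord x ((d - 2) / 2) + (-1) ^ r * coord x (d / 2) := by
  have : phiE d r = eV d ((d - 2) / 2) + (-1 : ℂ) ^ r • eV d (d / 2) := by
    ext
    simp [phiE]
  simp [this, star_eV_dotProduct]

theorem inpD_tpv (a b c u v w : Fin d → ℂ) :
    inpD d (tpv d a b c) (tpv d u v w) = (star a ⬝ᵥ u) * (star b ⬝ᵥ v) * (star c ⬝ᵥ w) := by
  rw [dotProduct, dotProduct, dotProduct, sum_mul_sum, sum_mul_sum, inpD, Fintype.sum_prod_type]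
  refine sum_congr rfl fun i _ => ?_
  rw [Fintype.sum_prod_type, sum_comm]
  refine sum_congr rfl fun j _ => ?_
  rw [sum_mul]
  refine sum_congr rfl fun k _ => ?_
  simp only [tpv, Pi.star_apply, map_mul, Complex.star_def]
  ring

theorem isPrimitiveRoot_conj_wN {m : ℕ} (hm : m ≠ 0) :
    IsPrimitiveRoot (starRingEnd ℂ (wN m)) m :=
  (Complex.isPrimitiveRoot_exp m hm).map_of_injective (starRingEnd ℂ).injective

end Coordinates

section Levels

variable {d k : ℕ} {x u v w : Fin d → ℂ}

def window (k : ℕ) (x : Fin d → ℂ) : ℕ → ℂ := fun s => coord x (k + s)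

def SupportedIn (k : ℕ) (x : Fin d → ℂ) : Prop := ∀ t, coord x t ≠ 0 → k ≤ t ∧ t + k < d

theorem star_etaG_dotProduct (hk : 2 * k + 2 ≤ d) (i : ℕ) (x : Fin d → ℂ) :
    star (etaG d k i) ⬝ᵥ x = ∑ s ∈ range (d - 1 - 2 * k),
      starRingEnd ℂ (wN (d - 1 - 2 * k)) ^ (i * s) * window k x s := by
  unfold etaG
  rw [star_sum_mul_dotProduct, ← Ico_add_one_right_eq_Icc, sum_Ico_eq_sum_range,
    show d - 2 - k + 1 - k = d - 1 - 2 * k by omega]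
  simp [window, star_eV_dotProduct]

theorem star_xiG_dotProduct (hk : 2 * k + 2 ≤ d) (j : ℕ) (x : Fin d → ℂ) :
    star (xiG d k j) ⬝ᵥ x = ∑ s ∈ range (d - 1 - 2 * k),
      starRingEnd ℂ (wN (d - 1 - 2 * k)) ^ (j * s) * window k x (s + 1) := by
  unfold xiG
  rw [star_sum_mul_dotProduct, ← Ico_add_one_right_eq_Icc, sum_Ico_eq_sum_range,
    show d - 2 - k + 1 - k = d - 1 - 2 * k by omega]
  simp [window, star_eV_dotProduct, add_assoc]

theorem supportedIn_zero (x : Fin d → ℂ) : SupportedIn 0 x := fun t ht =>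
  ⟨t.zero_le, by_contra fun h => ht (dif_neg (by omega))⟩

theorem SupportedIn.exists_window_ne_zero (hx : x ≠ 0) (h : SupportedIn k x) :
    ∃ s ≤ d - 1 - 2 * k, window k x s ≠ 0 := by
  obtain ⟨i, hi⟩ := Function.ne_iff.1 hx
  have hi' : coord x i ≠ 0 := by simpa [coord] using hi
  obtain ⟨hki, hid⟩ := h i hi'
  exact ⟨i - k, by omega, by simpa [window, Nat.add_sub_cancel' hki] using hi'⟩

theorem SupportedIn.sum_coord (hk : 2 * k < d) (h : SupportedIn k x) :
    ∑ t ∈ range d, coord x t = ∑ s ∈ range (d - 1 - 2 * k + 1), window k x s := by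
  rw [show d - 1 - 2 * k + 1 = d - k - k by omega]
  unfold window
  rw [← sum_Ico_eq_sum_range (coord x)]
  refine (sum_subset (fun t ht => ?_) fun t _ ht => ?_).symm
  · simp only [mem_Ico, mem_range] at ht ⊢
    omega
  · by_contra hne
    have := h t hne
    simp only [mem_Ico] at ht
    omega

theorem SupportedIn.succ (h : SupportedIn k x) (h₀ : window k x 0 = 0)
    (hm : window k x (d - 1 - 2 * k) = 0) : SupportedIn (k + 1) x := by
  intro t ht
  obtain ⟨hkt, htd⟩ := h t ht
  refine ⟨Nat.lt_of_le_of_ne hkt fun hk => ht ?_, ?_⟩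
  · simpa [window, ← hk] using h₀
  · by_contra htd'
    apply ht
    rw [show t = k + (d - 1 - 2 * k) by omega]
    exact hm

theorem orthFamily_window (hk : 2 * k + 2 ≤ d) (e : ℕ) (p q r : Fin d → ℂ)
    (h : ∀ i < d - 1 - 2 * k, ∀ j < d - 1 - 2 * k, ¬(i = 0 ∧ j = 0) →
      (star (eV d e) ⬝ᵥ r) * (star (xiG d k j) ⬝ᵥ p) * (star (etaG d k i) ⬝ᵥ q) = 0) :
    OrthFamily (d - 1 - 2 * k) (coord r e) (window k p) (window k q) :=
  orthFamily_of_dft (isPrimitiveRoot_conj_wN (by omega)) fun i hi j hj hij => by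
    rw [← star_eV_dotProduct, ← star_xiG_dotProduct hk, ← star_etaG_dotProduct hk]
    exact h i hi j hj hij

theorem windowConditions_of_orthogonal (hk : 2 * k + 4 ≤ d) (hu : SupportedIn k u)
    (hv : SupportedIn k v) (hw : SupportedIn k w)
    (h : ∀ x ∈ Cset d k, inpD d x (tpv d u v w) = 0) (hstop : inpD d (stopD d) (tpv d u v w) = 0) :
    WindowConditions (d - 1 - 2 * k) (window k u) (window k v) (window k w) := by
  have prod : ∀ a b c, tpv d a b c ∈ Cset d k →
      (star a ⬝ᵥ u) * (star b ⬝ᵥ v) * (star c ⬝ᵥ w) = 0 := fun a b c hx => by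
    rw [← inpD_tpv]
    exact h _ hx
  have hlast : ∀ x : Fin d → ℂ, window k x (d - 1 - 2 * k) = coord x (d - 1 - k) := fun x => by
    simp only [window, show k + (d - 1 - 2 * k) = d - 1 - k by omega]
  refine ⟨?_, ?_, ?_, ?_, ?_, ?_, ?_⟩
  · exact orthFamily_window (by omega) k w v u fun i hi j hj hij => by
      linear_combination prod (eV d k) (etaG d k i) (xiG d k j) ⟨i, j, hi, hj, hij, by simp⟩
  · exact orthFamily_window (by omega) k u w v fun i hi j hj hij => by
      linear_combination prod (xiG d k j) (eV d k) (etaG d k i) ⟨i, j, hi, hj, hij, by simp⟩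
  · exact orthFamily_window (by omega) k v u w fun i hi j hj hij => by
      linear_combination prod (etaG d k i) (xiG d k j) (eV d k) ⟨i, j, hi, hj, hij, by simp⟩
  · rw [hlast]
    exact orthFamily_window (by omega) _ v w u fun i hi j hj hij => by
      linear_combination
        prod (eV d (d - 1 - k)) (xiG d k j) (etaG d k i) ⟨i, j, hi, hj, hij, by simp⟩
  · rw [hlast]
    exact orthFamily_window (by omega) _ w u v fun i hi j hj hij => by
      linear_combination
        prod (etaG d k i) (eV d (d - 1 - k)) (xiG d k j) ⟨i, j, hi, hj, hij, by simp⟩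
  · rw [hlast]
    exact orthFamily_window (by omega) _ u v w fun i hi j hj hij => by
      linear_combination
        prod (xiG d k j) (etaG d k i) (eV d (d - 1 - k)) ⟨i, j, hi, hj, hij, by simp⟩
  · rwa [stopD, inpD_tpv, star_sum_eV_dotProduct, star_sum_eV_dotProduct,
      star_sum_eV_dotProduct, hu.sum_coord (by omega), hv.sum_coord (by omega),
      hw.sum_coord (by omega)] at hstop

theorem supportedIn_succ (hk : 2 * k + 4 ≤ d) (hu : u ≠ 0) (hv : v ≠ 0) (hw : w ≠ 0)
    (hsupp : SupportedIn k u ∧ SupportedIn k v ∧ SupportedIn k w)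
    (h : ∀ x ∈ Cset d k, inpD d x (tpv d u v w) = 0) (hstop : inpD d (stopD d) (tpv d u v w) = 0) :
    SupportedIn (k + 1) u ∧ SupportedIn (k + 1) v ∧ SupportedIn (k + 1) w := by
  obtain ⟨hsu, hsv, hsw⟩ := hsupp
  obtain ⟨⟨hu₀, hum⟩, ⟨hv₀, hvm⟩, ⟨hw₀, hwm⟩⟩ :=
    (windowConditions_of_orthogonal hk hsu hsv hsw h hstop).ends_eq_zero (by omega)
      (hsu.exists_window_ne_zero hu) (hsv.exists_window_ne_zero hv) (hsw.exists_window_ne_zero hw)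
  exact ⟨hsu.succ hu₀ hum, hsv.succ hv₀ hvm, hsw.succ hw₀ hwm⟩

theorem SupportedIn.star_sum_eV_dotProduct_eq_phiE (heven : Even d) (hd : 2 ≤ d)
    (h : SupportedIn ((d - 2) / 2) x) :
    star (fun a => ∑ i ∈ range d, eV d i a) ⬝ᵥ x = star (phiE d 0) ⬝ᵥ x := by
  obtain ⟨n, rfl⟩ := heven
  rw [star_sum_eV_dotProduct, h.sum_coord (by omega), star_phiE_dotProduct,
    show n + n - 1 - 2 * ((n + n - 2) / 2) + 1 = 2 by omega, sum_range_succ, sum_range_one]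
  simp only [window, pow_zero, one_mul, add_zero]
  congr 2
  omega

theorem SupportedIn.eq_zero_of_phiE (heven : Even d) (h : SupportedIn ((d - 2) / 2) x)
    (h₀ : star (phiE d 0) ⬝ᵥ x = 0) (h₁ : star (phiE d 1) ⬝ᵥ x = 0) : x = 0 := by
  rw [star_phiE_dotProduct] at h₀ h₁
  have hp : coord x ((d - 2) / 2) = 0 := by linear_combination (h₀ + h₁) / 2
  have hq : coord x (d / 2) = 0 := by linear_combination (h₀ - h₁) / 2
  ext i
  by_contra hi
  have hi' : coord x i ≠ 0 := by simpa [coord] using hi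
  obtain ⟨n, rfl⟩ := heven
  have := h i hi'
  rcases (show (i : ℕ) = (n + n - 2) / 2 ∨ (i : ℕ) = (n + n) / 2 by omega) with hi | hi
  · exact hi' (hi ▸ hp)
  · exact hi' (hi ▸ hq)

theorem eq_zero_or_of_forall_mul_mul_eq_zero {ι R : Type*} [MulZeroClass R] [NoZeroDivisors R]
    {f g h : ι → R} (H : ∀ r s t, f r * g s * h t = 0) : f = 0 ∨ g = 0 ∨ h = 0 := by
  by_contra! hne
  obtain ⟨r, hr⟩ := Function.ne_iff.1 hne.1
  obtain ⟨s, hs⟩ := Function.ne_iff.1 hne.2.1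
  obtain ⟨t, ht⟩ := Function.ne_iff.1 hne.2.2
  exact mul_ne_zero (mul_ne_zero hr hs) ht (H r s t)

theorem eq_zero_of_supportedIn_middle (heven : Even d) (hd : 2 ≤ d)
    (hu : SupportedIn ((d - 2) / 2) u) (hv : SupportedIn ((d - 2) / 2) v)
    (hw : SupportedIn ((d - 2) / 2) w) (h : ∀ x ∈ A0set d, inpD d x (tpv d u v w) = 0)
    (hstop : inpD d (stopD d) (tpv d u v w) = 0) : u = 0 ∨ v = 0 ∨ w = 0 := by
  have hprod : ∀ r s t : Fin 2,
      (star (phiE d r) ⬝ᵥ u) * (star (phiE d s) ⬝ᵥ v) * (star (phiE d t) ⬝ᵥ w) = 0 := by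
    intro r s t
    by_cases h₀ : (r : ℕ) = 0 ∧ (s : ℕ) = 0 ∧ (t : ℕ) = 0
    · rwa [h₀.1, h₀.2.1, h₀.2.2, ← hu.star_sum_eV_dotProduct_eq_phiE heven hd,
        ← hv.star_sum_eV_dotProduct_eq_phiE heven hd,
        ← hw.star_sum_eV_dotProduct_eq_phiE heven hd, ← inpD_tpv]
    · rw [← inpD_tpv]
      exact h _ ⟨r, s, t, r.isLt, s.isLt, t.isLt, h₀, rfl⟩
  rcases eq_zero_or_of_forall_mul_mul_eq_zero hprod with h₀ | h₀ | h₀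
  · exact Or.inl (hu.eq_zero_of_phiE heven (congrFun h₀ 0) (congrFun h₀ 1))
  · exact Or.inr (Or.inl (hv.eq_zero_of_phiE heven (congrFun h₀ 0) (congrFun h₀ 1)))
  · exact Or.inr (Or.inr (hw.eq_zero_of_phiE heven (congrFun h₀ 0) (congrFun h₀ 1)))

end Levels

/-- For every even d ≥ 4, U_d^even is an unextendible product basis: any product
vector orthogonal to every member of U_d^even is zero. -/
theorem Ueven_unextendible (d : ℕ) (hd : 4 ≤ d) (heven : Even d)
    (u v w : Fin d → ℂ)
    (h : ∀ x ∈ Ueven d, inpD d x (tpv d u v w) = 0) :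
    tpv d u v w = 0 := by
  by_contra hne
  obtain ⟨hu, hv, hw⟩ : u ≠ 0 ∧ v ≠ 0 ∧ w ≠ 0 := by
    refine ⟨?_, ?_, ?_⟩ <;> rintro rfl <;> exact hne (by ext; simp [tpv])
  have hstop := h _ (Or.inr rfl)
  have hsupp : ∀ k ≤ (d - 2) / 2, SupportedIn k u ∧ SupportedIn k v ∧ SupportedIn k w := by
    intro k hk
    induction k with
    | zero => exact ⟨supportedIn_zero u, supportedIn_zero v, supportedIn_zero w⟩
    | succ k ih =>
      exact supportedIn_succ (by omega) hu hv hw (ih (by omega))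
        (fun x hx => h x (Or.inl (Or.inl ⟨k, by omega, hx⟩))) hstop
  obtain ⟨hsu, hsv, hsw⟩ := hsupp _ le_rfl
  rcases eq_zero_of_supportedIn_middle heven (by omega) hsu hsv hsw
    (fun x hx => h x (Or.inl (Or.inr hx))) hstop with h₀ | h₀ | h₀
  exacts [hu h₀, hv h₀, hw h₀]
end
end

section
/- Non-orthogonality of the generalized Fourier vectors: let d ≥ 3 and for each nonnegative integer ℓ with d − 2ℓ ≥ 3 define, in ℂ^d with standard basis e_0, …, e_{d−1}, the vectors η₁^{(d−2ℓ)} = Σ_{t=ℓ}^{d−2−ℓ} w_{d−1−2ℓ}^{t−ℓ} e_t and ξ₁^{(d−2ℓ)} = Σ_{t=ℓ}^{d−2−ℓ} w_{d−1−2ℓ}^{t−ℓ} e_{t+1}, where w_n = exp(2πi/n). Then for all nonnegative integers ℓ₁, …, ℓ₆ with d − 2ℓ_i ≥ 3 for each i: ⟨ξ₁^{(d−2ℓ₁)}, ξ₁^{(d−2ℓ₂)}⟩ ≠ 0, ⟨η₁^{(d−2ℓ₃)}, η₁^{(d−2ℓ₄)}⟩ ≠ 0, and ⟨ξ₁^{(d−2ℓ₅)},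 η₁^{(d−2ℓ₆)}⟩ ≠ 0, where ⟨·,·⟩ is the standard Hermitian inner product on ℂ^d. -/
open scoped ComplexOrder

noncomputable section

lemma wN_ne_zero (n : ℕ) : wN n ≠ 0 := Complex.exp_ne_zero _

lemma conj_wN (n : ℕ) :
    (starRingEnd ℂ) (wN n) = Complex.exp (-(2 * Real.pi * Complex.I / n)) := by
  rw [wN, ← Complex.exp_conj]
  congr 1
  simp [map_div₀, Complex.conj_I, map_ofNat]
  ring

lemma geom_exp_ne_zero (N : ℕ) (hN : 0 < N) (θ : ℝ)
    (H : θ = 0 ∨ ¬∃ m : ℤ, (N : ℝ) * θ = m) :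
    ∑ s ∈ Finset.range N, Complex.exp (2 * Real.pi * Complex.I * (θ : ℂ)) ^ s ≠ 0 := by
  rcases H with h | h
  · simp [h, hN.ne']
  · have h2pi : (2 * (Real.pi : ℂ) * Complex.I) ≠ 0 := by
      simp [Real.pi_ne_zero, Complex.I_ne_zero, Complex.ofReal_ne_zero]
    have hzN : Complex.exp (2 * Real.pi * Complex.I * (θ : ℂ)) ^ N ≠ 1 := by
      rw [Ne, ← Complex.exp_nat_mul, Complex.exp_eq_one_iff]
      rintro ⟨m, hm⟩
      apply h
      refine ⟨m, ?_⟩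
      have key : (((N : ℝ) * θ : ℝ) : ℂ) = (m : ℂ) := by
        apply mul_right_cancel₀ h2pi
        push_cast
        push_cast at hm
        linear_combination hm
      exact_mod_cast key
    have hz1 : Complex.exp (2 * Real.pi * Complex.I * (θ : ℂ)) ≠ 1 := by
      intro h1; exact hzN (by rw [h1, one_pow])
    rw [geom_sum_eq hz1]
    exact div_ne_zero (sub_ne_zero.mpr hzN) (sub_ne_zero.mpr hz1)




lemma eta_apply (d l : ℕ) (h : 3 ≤ d - 2 * l) (a : Fin d) :
    etaG d l 1 a = if (a : ℕ) ∈ Finset.Icc l (d - 2 - l)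
      then wN (d - 1 - 2 * l) ^ ((a : ℕ) - l) else 0 := by
  unfold etaG eV
  by_cases hmem : (a : ℕ) ∈ Finset.Icc l (d - 2 - l)
  · rw [if_pos hmem, Finset.sum_eq_single (a : ℕ)]
    · simp
    · intro b _ hne
      simp [Ne.symm hne]
    · intro hc; exact absurd hmem hc
  · rw [if_neg hmem]
    apply Finset.sum_eq_zero
    intro t ht
    rw [if_neg, mul_zero]
    intro hc
    exact hmem (hc ▸ ht)

lemma xi_apply (d l : ℕ) (h : 3 ≤ d - 2 * l) (a : Fin d) :
    xiG d l 1 a = if (a : ℕ) ∈ Finset.Icc (l + 1) (d - 1 - l)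
      then wN (d - 1 - 2 * l) ^ ((a : ℕ) - (l + 1)) else 0 := by
  unfold xiG eV
  by_cases hmem : (a : ℕ) ∈ Finset.Icc (l + 1) (d - 1 - l)
  · rw [Finset.mem_Icc] at hmem
    rw [if_pos (Finset.mem_Icc.mpr hmem), Finset.sum_eq_single ((a : ℕ) - 1)]
    · have h1 : (a : ℕ) - 1 + 1 = (a : ℕ) := by omega
      have h2 : (a : ℕ) - 1 - l = (a : ℕ) - (l + 1) := by omega
      simp [h1, h2]
    · intro b _ hne
      have : (a : ℕ) ≠ b + 1 := by omega
      simp [this]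
    · intro hc
      exact absurd (Finset.mem_Icc.mpr (by omega)) hc
  · rw [if_neg hmem]
    apply Finset.sum_eq_zero
    intro t ht
    rw [Finset.mem_Icc] at ht
    rw [if_neg, mul_zero]
    intro hc
    exact hmem (Finset.mem_Icc.mpr (by omega))

lemma fin_sum_reduce (d A₁ B₁ A₂ B₂ : ℕ) (hB₁ : B₁ < d) (f g : ℕ → ℂ) :
    ∑ a : Fin d, (if (a : ℕ) ∈ Finset.Icc A₁ B₁ then f (a : ℕ) else 0) *
        (if (a : ℕ) ∈ Finset.Icc A₂ B₂ then g (a : ℕ) else 0)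
      = ∑ a ∈ Finset.Icc (max A₁ A₂) (min B₁ B₂), f a * g a := by
  rw [Fin.sum_univ_eq_sum_range (fun a =>
    (if a ∈ Finset.Icc A₁ B₁ then f a else 0) * (if a ∈ Finset.Icc A₂ B₂ then g a else 0))]
  rw [Finset.sum_congr rfl (g := fun a =>
      if a ∈ Finset.Icc (max A₁ A₂) (min B₁ B₂) then f a * g a else 0)
    (fun a _ => by
      rw [ite_zero_mul_ite_zero]
      exact if_congr (by simp only [Finset.mem_Icc, max_le_iff, le_min_iff]; omega) rfl rfl)]
  rw [Finset.sum_ite_mem, Finset.inter_eq_right.mpr]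
  intro x hx
  rw [Finset.mem_Icc] at hx
  rw [Finset.mem_range]
  omega

lemma no_int (n₁ n₂ : ℕ) (h2 : 0 < n₂) (hlt : n₂ < n₁) (m : ℤ) :
    (n₂ : ℝ) * (1 / n₂ - 1 / n₁) ≠ m := by
  intro hm
  have h1' : (0 : ℝ) < n₁ := by exact_mod_cast h2.trans hlt
  have h2' : (0 : ℝ) < n₂ := by exact_mod_cast h2
  have hlt' : (n₂ : ℝ) < n₁ := by exact_mod_cast hlt
  have hr : (n₂ : ℝ) / n₁ < 1 := (div_lt_one h1').mpr hlt'
  have hr0 : 0 < (n₂ : ℝ) / n₁ := by positivity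
  have hm' : (m : ℝ) = 1 - (n₂ : ℝ) / n₁ := by
    rw [← hm]; field_simp
  have hlo : 0 < (m : ℝ) := by linarith
  have hhi : (m : ℝ) < 1 := by linarith
  have hlo' : 0 < m := by exact_mod_cast hlo
  have hhi' : m < 1 := by exact_mod_cast hhi
  omega

lemma no_int' (n₁ n₂ : ℕ) (h1 : 0 < n₁) (hlt : n₁ < n₂) (m : ℤ) :
    (n₁ : ℝ) * (1 / n₂ - 1 / n₁) ≠ m := by
  intro hm
  have h1' : (0 : ℝ) < n₁ := by exact_mod_cast h1
  have h2' : (0 : ℝ) < n₂ := by exact_mod_cast h1.trans hlt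
  have hlt' : (n₁ : ℝ) < n₂ := by exact_mod_cast hlt
  have hr : (n₁ : ℝ) / n₂ < 1 := (div_lt_one h2').mpr hlt'
  have hr0 : 0 < (n₁ : ℝ) / n₂ := by positivity
  have hm' : (m : ℝ) = (n₁ : ℝ) / n₂ - 1 := by
    rw [← hm]; field_simp
  have hlo : (-1 : ℝ) < m := by linarith
  have hhi : (m : ℝ) < 0 := by linarith
  have hlo' : (-1 : ℤ) < m := by exact_mod_cast hlo
  have hhi' : m < 0 := by exact_mod_cast hhi
  omega

lemma inner_sum_ne_zero (n₁ n₂ A B α β : ℕ) (h₁ : 0 < n₁) (h₂ : 0 < n₂)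
    (hα : α ≤ A) (hβ : β ≤ A) (hAB : A ≤ B)
    (H : n₁ = n₂ ∨ ¬∃ m : ℤ, ((B + 1 - A : ℕ) : ℝ) * (1 / n₂ - 1 / n₁) = m) :
    ∑ a ∈ Finset.Icc A B, (starRingEnd ℂ) (wN n₁ ^ (a - α)) * wN n₂ ^ (a - β) ≠ 0 := by
  have hn₁ : ((n₁ : ℂ)) ≠ 0 := Nat.cast_ne_zero.mpr h₁.ne'
  have hn₂ : ((n₂ : ℂ)) ≠ 0 := Nat.cast_ne_zero.mpr h₂.ne'
  have hz : (starRingEnd ℂ) (wN n₁) * wN n₂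
      = Complex.exp (2 * Real.pi * Complex.I * ((1 / n₂ - 1 / n₁ : ℝ) : ℂ)) := by
    rw [conj_wN, wN, ← Complex.exp_add]
    congr 1
    push_cast
    field_simp
    ring
  rw [← Finset.Ico_add_one_right_eq_Icc, Finset.sum_Ico_eq_sum_range]
  have key : ∀ s : ℕ, (starRingEnd ℂ) (wN n₁ ^ (A + s - α)) * wN n₂ ^ (A + s - β)
      = ((starRingEnd ℂ) (wN n₁ ^ (A - α)) * wN n₂ ^ (A - β)) *
        Complex.exp (2 * Real.pi * Complex.I * ((1 / n₂ - 1 / n₁ : ℝ) : ℂ)) ^ s := by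
    intro s
    rw [show A + s - α = (A - α) + s by omega, show A + s - β = (A - β) + s by omega,
      pow_add, pow_add, map_mul, ← hz, mul_pow]
    simp only [map_pow]
    ring
  rw [Finset.sum_congr rfl (fun s _ => key s), ← Finset.mul_sum]
  apply mul_ne_zero
  · exact mul_ne_zero ((map_ne_zero _).mpr (pow_ne_zero _ (wN_ne_zero n₁)))
      (pow_ne_zero _ (wN_ne_zero n₂))
  · apply geom_exp_ne_zero _ (by omega)
    rcases H with h | h
    · left; rw [h]; simp
    · right; exact h


/-- Non-orthogonality of the generalized Fourier vectors η₁^{(d−2ℓ)} and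
ξ₁^{(d−2ℓ)}: any two of them (of either kind) have nonzero inner product. -/
theorem fourier_vectors_nonorthogonal (d : ℕ) (hd : 3 ≤ d)
    (l1 l2 l3 l4 l5 l6 : ℕ)
    (h1 : 3 ≤ d - 2 * l1) (h2 : 3 ≤ d - 2 * l2) (h3 : 3 ≤ d - 2 * l3)
    (h4 : 3 ≤ d - 2 * l4) (h5 : 3 ≤ d - 2 * l5) (h6 : 3 ≤ d - 2 * l6) :
    (∑ a, (starRingEnd ℂ) (xiG d l1 1 a) * xiG d l2 1 a) ≠ 0 ∧
    (∑ a, (starRingEnd ℂ) (etaG d l3 1 a) * etaG d l4 1 a) ≠ 0 ∧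
    (∑ a, (starRingEnd ℂ) (xiG d l5 1 a) * etaG d l6 1 a) ≠ 0 := by
  have hxx : ∀ (la lb : ℕ), 3 ≤ d - 2 * la → 3 ≤ d - 2 * lb →
      (∑ a, (starRingEnd ℂ) (xiG d la 1 a) * xiG d lb 1 a) ≠ 0 := by
    intro la lb ha hb
    have e1 : ∀ a : Fin d, (starRingEnd ℂ) (xiG d la 1 a) * xiG d lb 1 a
        = (if (a : ℕ) ∈ Finset.Icc (la + 1) (d - 1 - la)
            then (starRingEnd ℂ) (wN (d - 1 - 2 * la) ^ ((a : ℕ) - (la + 1))) else 0)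
          * (if (a : ℕ) ∈ Finset.Icc (lb + 1) (d - 1 - lb)
            then wN (d - 1 - 2 * lb) ^ ((a : ℕ) - (lb + 1)) else 0) := fun a => by
      rw [xi_apply d la ha a, xi_apply d lb hb a, apply_ite (starRingEnd ℂ), map_zero]
    rw [Finset.sum_congr rfl (fun a _ => e1 a),
      fin_sum_reduce d (la + 1) (d - 1 - la) (lb + 1) (d - 1 - lb) (by omega)
        (fun x => (starRingEnd ℂ) (wN (d - 1 - 2 * la) ^ (x - (la + 1))))
        (fun x => wN (d - 1 - 2 * lb) ^ (x - (lb + 1)))]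
    refine inner_sum_ne_zero (d - 1 - 2 * la) (d - 1 - 2 * lb)
      (max (la + 1) (lb + 1)) (min (d - 1 - la) (d - 1 - lb)) (la + 1) (lb + 1)
      (by omega) (by omega) (le_max_left _ _) (le_max_right _ _) (by omega) ?_
    rcases Nat.lt_trichotomy la lb with hl | hl | hl
    · right; rintro ⟨m, hm⟩
      rw [show min (d - 1 - la) (d - 1 - lb) + 1 - max (la + 1) (lb + 1) = d - 1 - 2 * lb
        from by omega] at hm
      exact no_int (d - 1 - 2 * la) (d - 1 - 2 * lb) (by omega) (by omega) m hm
    · left; rw [hl]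
    · right; rintro ⟨m, hm⟩
      rw [show min (d - 1 - la) (d - 1 - lb) + 1 - max (la + 1) (lb + 1) = d - 1 - 2 * la
        from by omega] at hm
      exact no_int' (d - 1 - 2 * la) (d - 1 - 2 * lb) (by omega) (by omega) m hm
  have hee : ∀ (la lb : ℕ), 3 ≤ d - 2 * la → 3 ≤ d - 2 * lb →
      (∑ a, (starRingEnd ℂ) (etaG d la 1 a) * etaG d lb 1 a) ≠ 0 := by
    intro la lb ha hb
    have e1 : ∀ a : Fin d, (starRingEnd ℂ) (etaG d la 1 a) * etaG d lb 1 a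
        = (if (a : ℕ) ∈ Finset.Icc la (d - 2 - la)
            then (starRingEnd ℂ) (wN (d - 1 - 2 * la) ^ ((a : ℕ) - la)) else 0)
          * (if (a : ℕ) ∈ Finset.Icc lb (d - 2 - lb)
            then wN (d - 1 - 2 * lb) ^ ((a : ℕ) - lb) else 0) := fun a => by
      rw [eta_apply d la ha a, eta_apply d lb hb a, apply_ite (starRingEnd ℂ), map_zero]
    rw [Finset.sum_congr rfl (fun a _ => e1 a),
      fin_sum_reduce d la (d - 2 - la) lb (d - 2 - lb) (by omega)
        (fun x => (starRingEnd ℂ) (wN (d - 1 - 2 * la) ^ (x - la)))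
        (fun x => wN (d - 1 - 2 * lb) ^ (x - lb))]
    refine inner_sum_ne_zero (d - 1 - 2 * la) (d - 1 - 2 * lb)
      (max la lb) (min (d - 2 - la) (d - 2 - lb)) la lb
      (by omega) (by omega) (le_max_left _ _) (le_max_right _ _) (by omega) ?_
    rcases Nat.lt_trichotomy la lb with hl | hl | hl
    · right; rintro ⟨m, hm⟩
      rw [show min (d - 2 - la) (d - 2 - lb) + 1 - max la lb = d - 1 - 2 * lb
        from by omega] at hm
      exact no_int (d - 1 - 2 * la) (d - 1 - 2 * lb) (by omega) (by omega) m hm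
    · left; rw [hl]
    · right; rintro ⟨m, hm⟩
      rw [show min (d - 2 - la) (d - 2 - lb) + 1 - max la lb = d - 1 - 2 * la
        from by omega] at hm
      exact no_int' (d - 1 - 2 * la) (d - 1 - 2 * lb) (by omega) (by omega) m hm
  have hxe : (∑ a, (starRingEnd ℂ) (xiG d l5 1 a) * etaG d l6 1 a) ≠ 0 := by
    have e1 : ∀ a : Fin d, (starRingEnd ℂ) (xiG d l5 1 a) * etaG d l6 1 a
        = (if (a : ℕ) ∈ Finset.Icc (l5 + 1) (d - 1 - l5)
            then (starRingEnd ℂ) (wN (d - 1 - 2 * l5) ^ ((a : ℕ) - (l5 + 1))) else 0)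
          * (if (a : ℕ) ∈ Finset.Icc l6 (d - 2 - l6)
            then wN (d - 1 - 2 * l6) ^ ((a : ℕ) - l6) else 0) := fun a => by
      rw [xi_apply d l5 h5 a, eta_apply d l6 h6 a, apply_ite (starRingEnd ℂ), map_zero]
    rw [Finset.sum_congr rfl (fun a _ => e1 a),
      fin_sum_reduce d (l5 + 1) (d - 1 - l5) l6 (d - 2 - l6) (by omega)
        (fun x => (starRingEnd ℂ) (wN (d - 1 - 2 * l5) ^ (x - (l5 + 1))))
        (fun x => wN (d - 1 - 2 * l6) ^ (x - l6))]
    refine inner_sum_ne_zero (d - 1 - 2 * l5) (d - 1 - 2 * l6)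
      (max (l5 + 1) l6) (min (d - 1 - l5) (d - 2 - l6)) (l5 + 1) l6
      (by omega) (by omega) (le_max_left _ _) (le_max_right _ _) (by omega) ?_
    rcases Nat.lt_trichotomy l5 l6 with hl | hl | hl
    · right; rintro ⟨m, hm⟩
      rw [show min (d - 1 - l5) (d - 2 - l6) + 1 - max (l5 + 1) l6 = d - 1 - 2 * l6
        from by omega] at hm
      exact no_int (d - 1 - 2 * l5) (d - 1 - 2 * l6) (by omega) (by omega) m hm
    · left; rw [hl]
    · right; rintro ⟨m, hm⟩
      rw [show min (d - 1 - l5) (d - 2 - l6) + 1 - max (l5 + 1) l6 = d - 1 - 2 * l5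
        from by omega] at hm
      exact no_int' (d - 1 - 2 * l5) (d - 1 - 2 * l6) (by omega) (by omega) m hm
  exact ⟨hxx l1 l2 h1 h2, hee l3 l4 h3 h4, hxe⟩
end
end

section
/- Cyclic invariance of the general-dimensional UPBs: for every integer d ≥ 3, the linear map on ℂ^(Fin d × Fin d × Fin d) induced by the cyclic permutation of tensor factors, sending ψ to the vector (a,b,c) ↦ ψ(b,c,a), maps the set U_d bijectively onto itself, where U_d = (⋃_{k=0}^{(d−3)/2} C^{(d,d−2k)}) ∪ {S_d} when d is odd and U_d = (⋃_{k=0}^{(d−4)/2} C^{(d,d−2k)}) ∪ A^{(d,0)} ∪ {S_d} when d is even. -/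
open scoped ComplexOrder

noncomputable section

/-- U_d: the UPB of the strongest nonlocality in d ⊗ d ⊗ d, for d odd or even. -/
def Ud (d : ℕ) : Set (Fin d × Fin d × Fin d → ℂ) :=
  if d % 2 = 1 then Uodd d else Ueven d

lemma cyc_tpv (d : ℕ) (u v w : Fin d → ℂ) :
    (fun p : Fin d × Fin d × Fin d => tpv d u v w (p.2.1, p.2.2, p.1)) = tpv d w u v := by
  funext p; simp [tpv]; ring

lemma cyc_mapsTo_C (d k : ℕ) {x : Fin d × Fin d × Fin d → ℂ} (hx : x ∈ Cset d k) :
    (fun p : Fin d × Fin d × Fin d => x (p.2.1, p.2.2, p.1)) ∈ Cset d k := by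
  obtain ⟨i, j, h1, h2, h3, hx⟩ := hx
  refine ⟨i, j, h1, h2, h3, ?_⟩
  rcases hx with h | h | h | h | h | h <;> subst h <;> rw [cyc_tpv] <;> tauto

lemma cyc_mapsTo_A0 (d : ℕ) {x : Fin d × Fin d × Fin d → ℂ} (hx : x ∈ A0set d) :
    (fun p : Fin d × Fin d × Fin d => x (p.2.1, p.2.2, p.1)) ∈ A0set d := by
  obtain ⟨r, s, t, hr, hs, ht, h0, hx⟩ := hx
  subst hx
  exact ⟨t, r, s, ht, hr, hs, by tauto, cyc_tpv d _ _ _⟩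

lemma cyc_stop (d : ℕ) :
    (fun p : Fin d × Fin d × Fin d => stopD d (p.2.1, p.2.2, p.1)) = stopD d := by
  unfold stopD; rw [cyc_tpv]

lemma cyc_mapsTo_Ud (d : ℕ) :
    Set.MapsTo (fun ψ : Fin d × Fin d × Fin d → ℂ => fun p => ψ (p.2.1, p.2.2, p.1))
      (Ud d) (Ud d) := by
  intro x hx
  unfold Ud at *
  split at hx <;> split <;> try simp_all
  · rcases hx with ⟨k, hk, hC⟩ | hS
    · exact Or.inl ⟨k, hk, cyc_mapsTo_C d k hC⟩
    · simp only [Set.mem_singleton_iff] at hS; subst hS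
      exact Or.inr (cyc_stop d)
  · rcases hx with (⟨k, hk, hC⟩ | hA) | hS
    · exact Or.inl (Or.inl ⟨k, hk, cyc_mapsTo_C d k hC⟩)
    · exact Or.inl (Or.inr (cyc_mapsTo_A0 d hA))
    · simp only [Set.mem_singleton_iff] at hS; subst hS
      exact Or.inr (cyc_stop d)

/-- For every d ≥ 3, the cyclic permutation of tensor factors,
ψ ↦ ((a,b,c) ↦ ψ(b,c,a)), maps U_d bijectively onto itself. -/
theorem Ud_cyclic_invariant (d : ℕ) (hd : 3 ≤ d) :
    Set.BijOn
      (fun ψ : Fin d × Fin d × Fin d → ℂ => fun p => ψ (p.2.1, p.2.2, p.1))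
      (Ud d) (Ud d) := by
  have hTTT : ∀ ψ : Fin d × Fin d × Fin d → ℂ,
      (fun p : Fin d × Fin d × Fin d =>
        (fun q : Fin d × Fin d × Fin d =>
          (fun r : Fin d × Fin d × Fin d => ψ (r.2.1, r.2.2, r.1)) (q.2.1, q.2.2, q.1))
          (p.2.1, p.2.2, p.1)) = ψ := fun ψ => rfl
  refine ⟨cyc_mapsTo_Ud d, ?_, ?_⟩
  · intro x _ y _ h
    have h2 := congrArg (fun ψ : Fin d × Fin d × Fin d → ℂ =>
      fun p : Fin d × Fin d × Fin d =>
        (fun q : Fin d × Fin d × Fin d => ψ (q.2.1, q.2.2, q.1)) (p.2.1, p.2.2, p.1)) h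
    simpa using h2
  · intro y hy
    exact ⟨_, cyc_mapsTo_Ud d (cyc_mapsTo_Ud d hy), hTTT y⟩
end
end
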